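/- Let X^k, X^{k+1} ⪰ 0 with X^{k+1} produced by one DCA step, i.e., X^{k+1} minimizes (1/2)‖𝒜(X) − b‖₂² + λ⟨X, I − Δ^k⟩ over X ⪰ 0, where Δ^k ∈ ∂‖X^k‖_F, and the KKT conditions hold at X^{k+1} with multiplier Λ^{k+1} ⪰ 0, ⟨Λ^{k+1}, X^{k+1}⟩ = 0. Then φ(X^k) − φ(X^{k+1}) ≥ (1/2)‖𝒜(X^k − X^{k+1})‖₂² + λ(‖X^{k+1}‖_F − ‖X^k‖_F − ⟨Δ^k, X^{k+1} − X^k⟩) ≥ 0, where φ(X) = (1/2)‖𝒜(X) − b‖₂² + λ(Tr(X) − ‖X‖_F). -/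

import Mathlib

open Matrix
open scoped ComplexOrder

noncomputable def frob {n : ℕ} (X : Matrix (Fin n) (Fin n) ℂ) : ℝ :=
  Real.sqrt ((Xᴴ * X).trace.re)

noncomputable def enorm' {m : ℕ} (v : Fin m → ℝ) : ℝ :=
  Real.sqrt (∑ i, (v i) ^ 2)

/-- Operator norm of a linear map `𝒜` restricted to Hermitian matrices,
with Frobenius norm on the source and Euclidean norm on the target. -/
noncomputable def opNormL {n m : ℕ}
    (𝒜 : Matrix (Fin n) (Fin n) ℂ →ₗ[ℝ] (Fin m → ℝ)) : ℝ :=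
  sSup {t : ℝ | ∃ X : Matrix (Fin n) (Fin n) ℂ, X.IsHermitian ∧ X ≠ 0 ∧
    t = enorm' (𝒜 X) / frob X}

noncomputable def phi {n m : ℕ} (𝒜 : Matrix (Fin n) (Fin n) ℂ →ₗ[ℝ] (Fin m → ℝ))
    (b : Fin m → ℝ) (lam : ℝ) (X : Matrix (Fin n) (Fin n) ℂ) : ℝ :=
  (1 / 2) * (enorm' (𝒜 X - b)) ^ 2 + lam * (X.trace.re - frob X)

/-!
Expanding the least-squares term around `X^{k+1}` gives the exact identity
`φ(X^k) - φ(X^{k+1}) = ½‖𝒜(X^k - X^{k+1})‖² + λ(‖X^{k+1}‖_F - ‖X^k‖_F - ⟨Δ^k, X^{k+1} - X^k⟩)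
  + ⟨X^k - X^{k+1}, G⟩`, where `G = 𝒜*(𝒜 X^{k+1} - b) + λ(I - Δ^k)` is the gradient of the
DCA subproblem at `X^{k+1}`. Stationarity says `G = Λ`, and complementary slackness reduces
`⟨X^k - X^{k+1}, Λ⟩` to `⟨X^k, Λ⟩ ≥ 0`, the trace of a product of two positive semidefinite
matrices. The middle term is nonnegative by the subgradient inequality for `‖·‖_F` at `X^k`.
-/

lemma enorm'_sq {m : ℕ} (v : Fin m → ℝ) : enorm' v ^ 2 = ∑ i, v i ^ 2 :=
  Real.sq_sqrt (Finset.sum_nonneg fun _ _ => sq_nonneg _)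

lemma enorm'_add_sq {m : ℕ} (u v : Fin m → ℝ) :
    enorm' (u + v) ^ 2 = enorm' u ^ 2 + enorm' v ^ 2 + 2 * ∑ i, u i * v i := by
  simp only [enorm'_sq, Pi.add_apply, Finset.mul_sum, ← Finset.sum_add_distrib]
  exact Finset.sum_congr rfl fun i _ => by ring

section Trace

variable {ι : Type*} [Fintype ι]

lemma re_trace_conjTranspose_mul_comm (A B : Matrix ι ι ℂ) :
    ((Aᴴ * B).trace).re = ((Bᴴ * A).trace).re := by
  rw [← Complex.conj_re, ← Complex.star_def, ← trace_conjTranspose, conjTranspose_mul,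
    conjTranspose_conjTranspose]

open scoped MatrixOrder in
/-- Writing `A = √A * √A`, the trace of `Aᴴ * B` is that of the positive semidefinite
matrix `√Aᴴ * B * √A`. -/
lemma Matrix.PosSemidef.re_trace_conjTranspose_mul_nonneg [DecidableEq ι] {A B : Matrix ι ι ℂ}
    (hA : A.PosSemidef) (hB : B.PosSemidef) : 0 ≤ ((Aᴴ * B).trace).re := by
  have hsqrt : (CFC.sqrt A)ᴴ = CFC.sqrt A := (CFC.sqrt_nonneg A).posSemidef.isHermitian.eq
  have htrace : ((CFC.sqrt A)ᴴ * B * CFC.sqrt A).trace = (Aᴴ * B).trace := by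
    rw [trace_mul_cycle, hsqrt, CFC.sqrt_mul_sqrt_self A hA.nonneg, hA.isHermitian.eq]
  rw [← htrace]
  exact (Complex.nonneg_iff.mp (hB.conjTranspose_mul_mul_same _).trace_nonneg).1

end Trace

lemma phi_sub_phi_eq {n m : ℕ} (𝒜 : Matrix (Fin n) (Fin n) ℂ →ₗ[ℝ] (Fin m → ℝ))
    (𝒜adj : (Fin m → ℝ) →ₗ[ℝ] Matrix (Fin n) (Fin n) ℂ)
    (hadj : ∀ X : Matrix (Fin n) (Fin n) ℂ, X.IsHermitian →
      ∀ y : Fin m → ℝ, (∑ i, 𝒜 X i * y i) = ((Xᴴ * 𝒜adj y).trace).re)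
    (b : Fin m → ℝ) (lam : ℝ) {X Y : Matrix (Fin n) (Fin n) ℂ} (hX : X.IsHermitian)
    (hY : Y.IsHermitian) (Δ : Matrix (Fin n) (Fin n) ℂ) :
    phi 𝒜 b lam X - phi 𝒜 b lam Y =
      (1 / 2) * enorm' (𝒜 (X - Y)) ^ 2 +
        lam * (frob Y - frob X - ((Δᴴ * (Y - X)).trace).re) +
        (((X - Y)ᴴ * (𝒜adj (𝒜 Y - b) + lam • (1 - Δ))).trace).re := by
  have hD : (X - Y).IsHermitian := hX.sub hY
  have hres : 𝒜 X - b = 𝒜 (X - Y) + (𝒜 Y - b) := by rw [map_sub]; abel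
  have hcross := hadj (X - Y) hD (𝒜 Y - b)
  have hΔ_swap : ((Δᴴ * (Y - X)).trace).re = -(((X - Y)ᴴ * Δ).trace).re := by
    rw [re_trace_conjTranspose_mul_comm, ← neg_sub X Y, conjTranspose_neg, Matrix.neg_mul,
      trace_neg, Complex.neg_re]
  have hlin : (((X - Y)ᴴ * (𝒜adj (𝒜 Y - b) + lam • (1 - Δ))).trace).re =
      (((X - Y)ᴴ * 𝒜adj (𝒜 Y - b)).trace).re +
        lam * (X.trace.re - Y.trace.re - (((X - Y)ᴴ * Δ).trace).re) := by
    simp only [Matrix.mul_add, Matrix.mul_smul, Matrix.mul_sub, Matrix.mul_one, hD.eq,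
      trace_add, trace_smul, trace_sub, Complex.add_re, Complex.smul_re, Complex.sub_re,
      smul_eq_mul]
  rw [phi, phi, hres, enorm'_add_sq, hΔ_swap, hlin, ← hcross]
  ring

theorem stmt_17_general {n m : ℕ}
    (𝒜 : Matrix (Fin n) (Fin n) ℂ →ₗ[ℝ] (Fin m → ℝ))
    (𝒜adj : (Fin m → ℝ) →ₗ[ℝ] Matrix (Fin n) (Fin n) ℂ)
    (hadj : ∀ X : Matrix (Fin n) (Fin n) ℂ, X.IsHermitian →
      ∀ y : Fin m → ℝ, (∑ i, 𝒜 X i * y i) = ((Xᴴ * 𝒜adj y).trace).re)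
    (b : Fin m → ℝ) (lam : ℝ) (hlam : 0 < lam)
    (Xk Xk1 Δ : Matrix (Fin n) (Fin n) ℂ)
    (hXk : Xk.PosSemidef) (hXk1 : Xk1.PosSemidef)
    -- `Δ` is a subgradient of the Frobenius norm at `Xk`
    (hΔ : ∀ Y : Matrix (Fin n) (Fin n) ℂ,
      ((Δᴴ * (Y - Xk)).trace).re ≤ frob Y - frob Xk)
    -- KKT conditions at `Xk1`
    (Λ : Matrix (Fin n) (Fin n) ℂ) (hΛ : Λ.PosSemidef)
    (hstat : 𝒜adj (𝒜 Xk1 - b) +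
      lam • ((1 : Matrix (Fin n) (Fin n) ℂ) - Δ) = Λ)
    (hcomp : (Λᴴ * Xk1).trace = 0) :
    (1 / 2) * (enorm' (𝒜 (Xk - Xk1))) ^ 2 +
      lam * (frob Xk1 - frob Xk - ((Δᴴ * (Xk1 - Xk)).trace).re) ≤
      phi 𝒜 b lam Xk - phi 𝒜 b lam Xk1 ∧
    0 ≤ (1 / 2) * (enorm' (𝒜 (Xk - Xk1))) ^ 2 +
      lam * (frob Xk1 - frob Xk - ((Δᴴ * (Xk1 - Xk)).trace).re) := by
  have hgap : 0 ≤ (((Xk - Xk1)ᴴ * Λ).trace).re := by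
    rw [conjTranspose_sub, Matrix.sub_mul, trace_sub, Complex.sub_re,
      re_trace_conjTranspose_mul_comm Xk1, hcomp, Complex.zero_re, sub_zero]
    exact hXk.re_trace_conjTranspose_mul_nonneg hΛ
  rw [phi_sub_phi_eq 𝒜 𝒜adj hadj b lam hXk.isHermitian hXk1.isHermitian Δ, hstat]
  constructor
  · linarith
  · have := mul_nonneg hlam.le (sub_nonneg.mpr (hΔ Xk1))
    positivity

theorem stmt_17 {n m : ℕ}
    (𝒜 : Matrix (Fin n) (Fin n) ℂ →ₗ[ℝ] (Fin m → ℝ))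
    (𝒜adj : (Fin m → ℝ) →ₗ[ℝ] Matrix (Fin n) (Fin n) ℂ)
    (hadj : ∀ X : Matrix (Fin n) (Fin n) ℂ, X.IsHermitian →
      ∀ y : Fin m → ℝ, (∑ i, 𝒜 X i * y i) = ((Xᴴ * 𝒜adj y).trace).re)
    (b : Fin m → ℝ) (lam : ℝ) (hlam : 0 < lam)
    (Xk Xk1 Δ : Matrix (Fin n) (Fin n) ℂ)
    (hXk : Xk.PosSemidef) (hXk1 : Xk1.PosSemidef)
    -- `Δ` is a subgradient of the Frobenius norm at `Xk`
    (hΔ : ∀ Y : Matrix (Fin n) (Fin n) ℂ,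
      ((Δᴴ * (Y - Xk)).trace).re ≤ frob Y - frob Xk)
    -- `Xk1` minimizes the convex DCA subproblem
    (hmin : ∀ X : Matrix (Fin n) (Fin n) ℂ, X.PosSemidef →
      (1 / 2) * (enorm' (𝒜 Xk1 - b)) ^ 2 +
        lam * ((Xk1ᴴ * ((1 : Matrix (Fin n) (Fin n) ℂ) - Δ)).trace).re ≤
      (1 / 2) * (enorm' (𝒜 X - b)) ^ 2 +
        lam * ((Xᴴ * ((1 : Matrix (Fin n) (Fin n) ℂ) - Δ)).trace).re)
    -- KKT conditions at `Xk1`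
    (Λ : Matrix (Fin n) (Fin n) ℂ) (hΛ : Λ.PosSemidef)
    (hstat : 𝒜adj (𝒜 Xk1 - b) +
      lam • ((1 : Matrix (Fin n) (Fin n) ℂ) - Δ) = Λ)
    (hcomp : (Λᴴ * Xk1).trace = 0) :
    (1 / 2) * (enorm' (𝒜 (Xk - Xk1))) ^ 2 +
      lam * (frob Xk1 - frob Xk - ((Δᴴ * (Xk1 - Xk)).trace).re) ≤
      phi 𝒜 b lam Xk - phi 𝒜 b lam Xk1 ∧
    0 ≤ (1 / 2) * (enorm' (𝒜 (Xk - Xk1))) ^ 2 +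
      lam * (frob Xk1 - frob Xk - ((Δᴴ * (Xk1 - Xk)).trace).re) :=
  stmt_17_general 𝒜 𝒜adj hadj b lam hlam Xk Xk1 Δ hXk hXk1 hΔ Λ hΛ hstat hcomp
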